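/- arXiv:2009.14576 — 5 statements merged into one kernel-verified Lean document; each statement's English description precedes it below -/
import Mathlib

section
/- Let a be a letter of an alphabet α. Then for all languages L, K over α: there exist languages M, N, O with L ⊆ N, O ⊆ N, {a} · M ⊆ O, N ⊆ M, and N ⊆ K, if and only if {a}∗ · L ⊆ K. (This computes the semantics of the string diagram representing the action of a∗ by concatenation.) -/
open Computability

theorem star_action_letter {α : Type*} (a : α) (L K : Language α) :
    (∃ M N O : Language α,
      L ≤ N ∧ O ≤ N ∧ ({[a]} : Language α) * M ≤ O ∧ N ≤ M ∧ N ≤ K) ↔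
    ({[a]} : Language α)∗ * L ≤ K := by
  constructor
  · rintro ⟨M, N, O, hLN, hON, haM, hNM, hNK⟩
    have h : ({[a]} : Language α) * N ≤ N :=
      le_trans (mul_le_mul_right hNM _) (le_trans haM hON)
    calc ({[a]} : Language α)∗ * L ≤ ({[a]} : Language α)∗ * N :=
          mul_le_mul_right hLN _
      _ ≤ N := kstar_mul_le le_rfl h
      _ ≤ K := hNK
  · intro h
    refine ⟨({[a]} : Language α)∗ * L, ({[a]} : Language α)∗ * L,
      ({[a]} : Language α)∗ * L, ?_, le_rfl, ?_, le_rfl, h⟩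
    · calc L = 1 * L := (one_mul L).symm
        _ ≤ ({[a]} : Language α)∗ * L := mul_le_mul_left one_le_kstar _
    · calc ({[a]} : Language α) * (({[a]} : Language α)∗ * L)
          = (({[a]} : Language α) * ({[a]} : Language α)∗) * L := (mul_assoc _ _ _).symm
      _ ≤ ({[a]} : Language α)∗ * L := mul_le_mul_left mul_kstar_le_kstar _
end

section
/- Define, by recursion on regular expressions e over an alphabet α, a relation T(e) ⊆ Language α × Language α by: T(0) = the total relation; T(1) = {(L, K) | L ⊆ K}; T(a) = {(L, K) | {a} · L ⊆ K} for a letter a; T(e + f) = {(L, K) | ∃ L₁ L₂ K₁ K₂, L ⊆ L₁ ∧ L ⊆ L₂ ∧ (L₁, K₁) ∈ T(e) ∧ (L₂, K₂) ∈ T(f) ∧ K₁ ⊆ K ∧ K₂ ⊆ K}; T(e · f) = {(L, K) | ∃ M, (L, M) ∈ T(f) ∧ (M, K) ∈ T(e)}; T(e*) = {(L, K) | ∃ M N, L ⊆ N ∧ M ⊆ N ∧ (N, M) ∈ T(e) ∧ N ⊆ K}. Then for every regular expression e, T(e) = {(L, K) | ⟦e⟧ · L ⊆ K}. -/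
open Computability

/-- The relation `T(e)` on languages, defined by recursion on the regular expression `e`,
computing the denotation of the string diagram encoding `e`. -/
def T {α : Type*} : RegularExpression α → Set (Language α × Language α)
  | .zero => Set.univ
  | .epsilon => {p | p.1 ≤ p.2}
  | .char a => {p | ({[a]} : Language α) * p.1 ≤ p.2}
  | .plus e f => {p | ∃ L₁ L₂ K₁ K₂ : Language α,
      p.1 ≤ L₁ ∧ p.1 ≤ L₂ ∧ (L₁, K₁) ∈ T e ∧ (L₂, K₂) ∈ T f ∧ K₁ ≤ p.2 ∧ K₂ ≤ p.2}
  | .comp e f => {p | ∃ M : Language α, (p.1, M) ∈ T f ∧ (M, p.2) ∈ T e}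
  | .star e => {p | ∃ M N : Language α, p.1 ≤ N ∧ M ≤ N ∧ (N, M) ∈ T e ∧ N ≤ p.2}

theorem T_eq_action {α : Type*} (e : RegularExpression α) :
    T e = {p : Language α × Language α | e.matches' * p.1 ≤ p.2} := by
  induction e with
  | zero =>
    ext p; simp [T, RegularExpression.matches']
  | epsilon =>
    ext p; simp [T, RegularExpression.matches']
  | char a =>
    ext p; simp [T, RegularExpression.matches']
  | plus e f ihe ihf =>
    ext p
    simp only [T, ihe, ihf, Set.mem_setOf_eq, RegularExpression.matches', add_mul]
    constructor
    · rintro ⟨L₁, L₂, K₁, K₂, h₁, h₂, he, hf, hK₁, hK₂⟩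
      refine sup_le (le_trans ?_ hK₁) (le_trans ?_ hK₂)
      · exact le_trans (mul_le_mul_right h₁ _) he
      · exact le_trans (mul_le_mul_right h₂ _) hf
    · intro h
      exact ⟨p.1, p.1, e.matches' * p.1, f.matches' * p.1, le_rfl, le_rfl, le_rfl, le_rfl,
        le_trans le_sup_left h, le_trans le_sup_right h⟩
  | comp e f ihe ihf =>
    ext p
    simp only [T, ihe, ihf, Set.mem_setOf_eq, RegularExpression.matches', mul_assoc]
    constructor
    · rintro ⟨M, hf, he⟩
      exact le_trans (mul_le_mul_right hf _) he
    · intro h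
      exact ⟨f.matches' * p.1, le_rfl, h⟩
  | star e ihe =>
    ext p
    simp only [T, ihe, Set.mem_setOf_eq, RegularExpression.matches']
    constructor
    · rintro ⟨M, N, hLN, hMN, heNM, hNK⟩
      have h1 : e.matches' * N ≤ N := le_trans heNM hMN
      have h2 : e.matches'∗ * N ≤ N := kstar_mul_le_self h1
      calc e.matches'∗ * p.1 ≤ e.matches'∗ * N := mul_le_mul_right hLN _
        _ ≤ N := h2
        _ ≤ p.2 := hNK
    · intro h
      refine ⟨e.matches' * (e.matches'∗ * p.1), e.matches'∗ * p.1, ?_, ?_, le_rfl, h⟩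
      · calc p.1 = 1 * p.1 := (one_mul _).symm
          _ ≤ e.matches'∗ * p.1 := mul_le_mul_left one_le_kstar _
      · rw [← mul_assoc]
        exact mul_le_mul_left mul_kstar_le_kstar _
end

section
/- (Matrix Arden's lemma) Let n be a natural number and D an n × n matrix of languages over an alphabet α. Then there exists an n × n matrix of languages D' such that for every vector B of n languages, the vector D' ⬝ B (where (D' ⬝ B)ᵢ = ⋃ⱼ D'ᵢⱼ · Bⱼ) is the least solution of the componentwise inequality B ∪ D ⬝ X ⊆ X; that is: for all i, Bᵢ ∪ ⋃ⱼ Dᵢⱼ · (D' ⬝ B)ⱼ ⊆ (D' ⬝ B)ᵢ, and for every vector X of n languages, if Bᵢ ∪ ⋃ⱼ Dᵢⱼ · Xⱼ ⊆ Xᵢ for all i, then (D' ⬝ B)ᵢ ⊆ Xᵢ for all i. -/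
/-- Matrix Arden's lemma: there is a matrix `D'` (playing the role of `D∗`) such that
for every vector of languages `B`, the vector `D' ⬝ B` is the least solution of the
componentwise language inequality `B ∪ D ⬝ X ⊆ X`. -/
theorem matrix_arden {α : Type*} (n : ℕ) (D : Fin n → Fin n → Language α) :
    ∃ D' : Fin n → Fin n → Language α, ∀ B : Fin n → Language α,
      (∀ i, B i ⊔ (⨆ j, D i j * (⨆ k, D' j k * B k)) ≤ ⨆ j, D' i j * B j) ∧
      ∀ X : Fin n → Language α,
        (∀ i, B i ⊔ (⨆ j, D i j * X j) ≤ X i) →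
        ∀ i, (⨆ j, D' i j * B j) ≤ X i := by
  -- powers of the matrix D
  let P : ℕ → Fin n → Fin n → Language α := fun k =>
    Nat.rec (fun i j => if i = j then 1 else 0)
      (fun _ prev i j => ⨆ m, D i m * prev m j) k
  have P0 : ∀ i j, P 0 i j = if i = j then 1 else 0 := fun _ _ => rfl
  have Psucc : ∀ k i j, P (k + 1) i j = ⨆ m, D i m * P k m j := fun _ _ _ => rfl
  refine ⟨fun i j => ⨆ k, P k i j, fun B => ⟨fun i => ?_, fun X hX => ?_⟩⟩
  · refine sup_le ?_ (iSup_le fun j => ?_)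
    · calc B i = (if i = i then 1 else 0) * B i := by simp
        _ ≤ (⨆ k, P k i i) * B i :=
          mul_le_mul_left (le_iSup_of_le 0 (le_of_eq (P0 i i).symm)) _
        _ ≤ _ := le_iSup (fun j => (⨆ k, P k i j) * B j) i
    · rw [Language.mul_iSup]
      refine iSup_le fun k => ?_
      rw [Language.iSup_mul, Language.mul_iSup]
      refine iSup_le fun m => ?_
      rw [← mul_assoc]
      refine le_iSup_of_le k ?_
      refine le_trans (mul_le_mul_left ?_ _) (mul_le_mul_left
        (le_iSup (fun k' => P k' i k) (m + 1)) _)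
      rw [Psucc]
      exact le_iSup_of_le j le_rfl
  -- minimality
  have key : ∀ k i j, P k i j * B j ≤ X i := by
    intro k
    induction k with
    | zero =>
      intro i j
      rw [P0]
      rcases eq_or_ne i j with h | h
      · subst h; simpa using le_trans le_sup_left (hX i)
      · simp [h]
    | succ k ih =>
      intro i j
      rw [Psucc, Language.iSup_mul]
      refine iSup_le fun m => ?_
      rw [mul_assoc]
      calc D i m * (P k m j * B j) ≤ D i m * X m := mul_le_mul_right (ih m j) _
        _ ≤ ⨆ m', D i m' * X m' := le_iSup (fun m' => D i m' * X m') m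
        _ ≤ X i := le_trans le_sup_right (hX i)
  intro i
  refine iSup_le fun j => ?_
  rw [Language.iSup_mul]
  exact iSup_le fun k => key k i j
end

section
/- (Kleene's theorem, expression-to-automaton direction) For every regular expression e over an alphabet α, there exist a finite type σ and a nondeterministic finite automaton M over α with state type σ such that M.accepts = ⟦e⟧. -/
/-!
Thompson's construction, carried out without ε-moves. Union comes from Mathlib's product DFA.
For concatenation, the automaton for `M₁` may additionally jump into the start states of `M₂`
whenever it could enter an accepting state of `M₁`; letting `M` jump back into its own start
states in the same way recognizes `L∗ L`, and `L∗ = 1 + L∗ L`. Both constructions are analysed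
through one invariant: after reading `x` the copy of `M` is in exactly the states that `M` reaches
on some suffix `z` of `x` whose complementary prefix lies in a fixed language `K`
(`K = L₁` for concatenation, `K = L∗` for the loop).
-/

open Set Computability

theorem Language.append_singleton_mem_kstar_iff {α : Type*} {L : Language α} {x : List α}
    {a : α} : x ++ [a] ∈ L∗ ↔ ∃ y ∈ L∗, ∃ z, y ++ z = x ∧ z ++ [a] ∈ L := by
  constructor
  · rw [mem_kstar_iff_exists_nonempty]
    rintro ⟨S, hS, hSL⟩
    rcases S.eq_nil_or_concat' with rfl | ⟨S, w, rfl⟩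
    · simp at hS
    obtain ⟨hw, hw_ne⟩ := hSL w (by simp)
    obtain ⟨z, b, rfl⟩ := w.eq_nil_or_concat'.resolve_left hw_ne
    rw [List.flatten_append, List.flatten_singleton, ← List.append_assoc,
      List.append_singleton_inj] at hS
    obtain ⟨rfl, rfl⟩ := hS
    exact ⟨S.flatten, join_mem_kstar fun y hy => (hSL y (by simp [hy])).1, z, rfl, hw⟩
  · rintro ⟨y, hy, z, rfl, hz⟩
    rw [List.append_assoc, ← one_add_kstar_mul_self_eq_kstar, mem_add]
    exact Or.inr (append_mem_mul hy hz)

namespace NFA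

variable {α σ σ₁ σ₂ : Type*}

section Basic

variable (M : NFA α σ)

theorem evalFrom_empty (x : List α) : M.evalFrom ∅ x = ∅ := by
  induction x with
  | nil => rfl
  | cons a x ih => rw [evalFrom_cons, stepSet_empty, ih]

theorem acceptsFrom_empty : M.acceptsFrom ∅ = 0 := by
  ext x
  simp [mem_acceptsFrom, evalFrom_empty]

theorem accepts_of_isEmpty [IsEmpty σ] : M.accepts = 0 := by
  ext x
  simp [mem_accepts]

theorem exists_accept_stepSet_eval_iff (x : List α) (a : α) :
    (∃ t ∈ M.accept, t ∈ M.stepSet (M.eval x) a) ↔ x ++ [a] ∈ M.accepts := by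
  rw [← eval_append_singleton]
  rfl

end Basic

section EvalAfter

def evalAfter (M : NFA α σ) (K : Language α) (x : List α) : Set σ :=
  {t | ∃ y ∈ K, ∃ z, y ++ z = x ∧ t ∈ M.eval z}

variable (M : NFA α σ) (K : Language α)

theorem evalAfter_nil : M.evalAfter K [] = {t ∈ M.start | [] ∈ K} := by
  ext t
  simp [evalAfter, and_comm]

theorem evalAfter_append_singleton (x : List α) (a : α) :
    M.evalAfter K (x ++ [a]) =
      M.stepSet (M.evalAfter K x) a ∪ {t ∈ M.start | x ++ [a] ∈ K} := by
  ext t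
  simp only [evalAfter, mem_union, mem_stepSet, mem_ofPred_eq]
  constructor
  · rintro ⟨y, hy, z, hyz, ht⟩
    rcases z.eq_nil_or_concat' with rfl | ⟨z, b, rfl⟩
    · simp_all
    · rw [← List.append_assoc, List.append_singleton_inj] at hyz
      obtain ⟨rfl, rfl⟩ := hyz
      rw [eval_append_singleton, mem_stepSet] at ht
      obtain ⟨s, hs, hts⟩ := ht
      exact Or.inl ⟨s, ⟨y, hy, z, rfl, hs⟩, hts⟩
  · rintro (⟨s, ⟨y, hy, z, rfl, hs⟩, hts⟩ | ⟨ht, hx⟩)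
    · refine ⟨y, hy, z ++ [a], by simp, ?_⟩
      rw [eval_append_singleton]
      exact mem_stepSet.2 ⟨s, hs, hts⟩
    · exact ⟨x ++ [a], hx, [], by simp, ht⟩

theorem mem_mul_accepts_iff (x : List α) :
    x ∈ K * M.accepts ↔ ∃ t ∈ M.accept, t ∈ M.evalAfter K x := by
  rw [Language.mem_mul]
  constructor
  · rintro ⟨y, hy, z, ⟨t, ht, hz⟩, rfl⟩
    exact ⟨t, ht, y, hy, z, rfl, hz⟩
  · rintro ⟨t, ht, y, hy, z, rfl, hz⟩
    exact ⟨y, hy, z, ⟨t, ht, hz⟩, rfl⟩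

theorem exists_accept_stepSet_evalAfter_iff (x : List α) (a : α) :
    (∃ t ∈ M.accept, t ∈ M.stepSet (M.evalAfter K x) a) ↔
      ∃ y ∈ K, ∃ z, y ++ z = x ∧ z ++ [a] ∈ M.accepts := by
  simp only [mem_stepSet]
  constructor
  · rintro ⟨t, ht, s, ⟨y, hy, z, rfl, hs⟩, hts⟩
    refine ⟨y, hy, z, rfl, t, ht, ?_⟩
    rw [eval_append_singleton]
    exact mem_stepSet.2 ⟨s, hs, hts⟩
  · rintro ⟨y, hy, z, rfl, t, ht, hz⟩
    rw [eval_append_singleton, mem_stepSet] at hz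
    obtain ⟨s, hs, hts⟩ := hz
    exact ⟨t, ht, s, ⟨y, hy, z, rfl, hs⟩, hts⟩

end EvalAfter

section Constructions

def epsilon : NFA α Unit :=
  ⟨fun _ _ => ∅, univ, univ⟩

theorem accepts_epsilon : (epsilon : NFA α Unit).accepts = 1 := by
  ext (_ | ⟨a, x⟩)
  · simp [mem_accepts, epsilon]
  · simp [accepts_eq_acceptsFrom_start, stepSet, epsilon, acceptsFrom_empty]

def char (c : α) : NFA α Bool where
  step
    | false, b => {t | t = true ∧ b = c}
    | true, _ => ∅
  start := {false}
  accept := {true}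

theorem accepts_char (c : α) : (char c).accepts = {[c]} := by
  ext x
  change _ ↔ x = [c]
  rcases x with _ | ⟨a, _ | ⟨b, x⟩⟩
  · simp [mem_accepts, char]
  · simp [accepts_eq_acceptsFrom_start, char, stepSet]
  · simp [accepts_eq_acceptsFrom_start, char, stepSet, iUnion_and, acceptsFrom_empty]

def concat (M₁ : NFA α σ₁) (M₂ : NFA α σ₂) : NFA α (σ₁ ⊕ σ₂) where
  step
    | .inl s, a =>
      .inl '' M₁.step s a ∪ .inr '' {t ∈ M₂.start | ∃ u ∈ M₁.accept, u ∈ M₁.step s a}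
    | .inr s, a => .inr '' M₂.step s a
  start := .inl '' M₁.start ∪ .inr '' {t ∈ M₂.start | [] ∈ M₁.accepts}
  accept := .inr '' M₂.accept

variable (M₁ : NFA α σ₁) (M₂ : NFA α σ₂)

theorem stepSet_concat (S : Set σ₁) (T : Set σ₂) (a : α) :
    (M₁.concat M₂).stepSet (.inl '' S ∪ .inr '' T) a =
      .inl '' M₁.stepSet S a ∪
        .inr '' (M₂.stepSet T a ∪ {t ∈ M₂.start | ∃ u ∈ M₁.accept, u ∈ M₁.stepSet S a}) := by
  ext (q | q)
  · simp [mem_stepSet, concat]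
  · simp only [mem_stepSet, concat, mem_union, mem_image, mem_ofPred_eq, reduceCtorEq,
      Sum.inr.injEq]
    aesop

theorem eval_concat (x : List α) :
    (M₁.concat M₂).eval x = .inl '' M₁.eval x ∪ .inr '' M₂.evalAfter M₁.accepts x := by
  induction x using List.reverseRecOn with
  | nil => rw [eval_nil, eval_nil, evalAfter_nil]; rfl
  | append_singleton x a ih =>
    rw [eval_append_singleton, ih, stepSet_concat, exists_accept_stepSet_eval_iff,
      eval_append_singleton, evalAfter_append_singleton]

theorem accepts_concat : (M₁.concat M₂).accepts = M₁.accepts * M₂.accepts := by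
  ext x
  rw [mem_mul_accepts_iff]
  change (∃ q ∈ _, q ∈ (M₁.concat M₂).eval x) ↔ _
  rw [eval_concat]
  simp [concat]

def loop (M : NFA α σ) : NFA α σ where
  step s a := M.step s a ∪ {t ∈ M.start | ∃ u ∈ M.accept, u ∈ M.step s a}
  start := M.start
  accept := M.accept

variable (M : NFA α σ)

theorem stepSet_loop (S : Set σ) (a : α) :
    M.loop.stepSet S a =
      M.stepSet S a ∪ {t ∈ M.start | ∃ u ∈ M.accept, u ∈ M.stepSet S a} := by
  ext t
  simp only [mem_stepSet, loop, mem_union, mem_ofPred_eq]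
  aesop

theorem eval_loop (x : List α) : M.loop.eval x = M.evalAfter M.accepts∗ x := by
  induction x using List.reverseRecOn with
  | nil => simp [evalAfter_nil, loop, Language.nil_mem_kstar]
  | append_singleton x a ih =>
    rw [eval_append_singleton, ih, stepSet_loop, exists_accept_stepSet_evalAfter_iff,
      ← Language.append_singleton_mem_kstar_iff, evalAfter_append_singleton]

theorem accepts_loop : M.loop.accepts = M.accepts∗ * M.accepts := by
  ext x
  rw [mem_mul_accepts_iff, ← eval_loop]
  rfl

end Constructions

theorem isRegular_accepts {σ : Type} [Finite σ] (M : NFA α σ) : M.accepts.IsRegular :=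
  have := Fintype.ofFinite σ
  ⟨Set σ, inferInstance, M.toDFA, M.toDFA_correct⟩

end NFA

namespace Language

variable {α : Type*}

theorem isRegular_zero : (0 : Language α).IsRegular :=
  (default : NFA α Empty).accepts_of_isEmpty ▸ NFA.isRegular_accepts _

theorem isRegular_one : (1 : Language α).IsRegular :=
  NFA.accepts_epsilon ▸ NFA.isRegular_accepts _

theorem isRegular_singleton_singleton (c : α) : ({[c]} : Language α).IsRegular :=
  NFA.accepts_char c ▸ NFA.isRegular_accepts _

theorem IsRegular.mul {L₁ L₂ : Language α} (h₁ : L₁.IsRegular) (h₂ : L₂.IsRegular) :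
    (L₁ * L₂).IsRegular := by
  obtain ⟨σ₁, _, M₁, rfl⟩ := h₁
  obtain ⟨σ₂, _, M₂, rfl⟩ := h₂
  rw [← M₁.toNFA_correct, ← M₂.toNFA_correct, ← NFA.accepts_concat]
  exact NFA.isRegular_accepts _

theorem IsRegular.kstar {L : Language α} (h : L.IsRegular) : L∗.IsRegular := by
  obtain ⟨σ, _, M, rfl⟩ := h
  rw [← M.toNFA_correct, ← one_add_kstar_mul_self_eq_kstar, ← NFA.accepts_loop]
  exact isRegular_one.add (NFA.isRegular_accepts _)

end Language

theorem RegularExpression.isRegular_matches' {α : Type*} (e : RegularExpression α) :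
    e.matches'.IsRegular := by
  induction e with
  | zero => exact Language.isRegular_zero
  | epsilon => exact Language.isRegular_one
  | char c => exact Language.isRegular_singleton_singleton c
  | plus e f he hf => exact he.add hf
  | comp e f he hf => exact he.mul hf
  | star e he => exact he.kstar

/-- Kleene's theorem, expression-to-automaton direction. -/
theorem regexp_to_nfa {α : Type} (e : RegularExpression α) :
    ∃ (σ : Type) (_ : Fintype σ) (M : NFA α σ), M.accepts = e.matches' := by
  obtain ⟨σ, _, M, hM⟩ := e.isRegular_matches'
  exact ⟨σ, inferInstance, M.toNFA, M.toNFA_correct.trans hM⟩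
end

section
/- (Kleene's theorem, automaton-to-expression direction) Let α be a finite alphabet and σ a finite type. For every nondeterministic finite automaton M over α with state type σ, there exists a regular expression e over α such that ⟦e⟧ = M.accepts. -/
/-!
McNaughton–Yamada: for a set `S` of states, let `L^S(p, r)` be the language of words leading from
`p` to `r` through intermediate states in `S` only. Then `L^∅(p, r)` is finite (at most `ε` and some
letters), and adding a state `q` to `S` gives
`L^{S ∪ {q}}(p, r) = L^S(p, r) + L^S(p, q) L^S(q, q)∗ L^S(q, r)`, by cutting a path at its visits
to `q`. By induction on `S`, every `L^S(p, r)` is denoted by a regular expression, and the accepted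
language is the finite union of `L^σ(p, r)` over start states `p` and accepting states `r`.
-/

open Set Computability

namespace RegularExpression

variable {α : Type*}

variable (α) in
def languages : Subsemiring (Language α) where
  carrier := range matches'
  zero_mem' := ⟨0, matches'_zero⟩
  one_mem' := ⟨1, matches'_epsilon⟩
  add_mem' := by
    rintro _ _ ⟨e, rfl⟩ ⟨f, rfl⟩
    exact ⟨e + f, matches'_add e f⟩
  mul_mem' := by
    rintro _ _ ⟨e, rfl⟩ ⟨f, rfl⟩
    exact ⟨e * f, matches'_mul e f⟩

theorem mem_languages {L : Language α} :
    L ∈ languages α ↔ ∃ e : RegularExpression α, e.matches' = L :=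
  Iff.rfl

theorem singleton_mem_languages (a : α) : ({[a]} : Language α) ∈ languages α :=
  ⟨char a, matches'_char a⟩

theorem kstar_mem_languages {L : Language α} (h : L ∈ languages α) : L∗ ∈ languages α := by
  obtain ⟨e, rfl⟩ := h
  exact ⟨e.star, matches'_star e⟩

theorem iSup_mem_languages {ι : Sort*} [Finite ι] {f : ι → Language α}
    (hf : ∀ i, f i ∈ languages α) : (⨆ i, f i) ∈ languages α := by
  have := Fintype.ofFinite (PLift ι)
  rw [← iSup_plift_down, ← Finset.sup_univ_eq_iSup]
  refine Finset.sup_induction (bot_eq_zero (α := Language α) ▸ zero_mem _) ?_ fun i _ => hf i.down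
  intro L hL L' hL'
  exact add_eq_sup L L' ▸ add_mem hL hL'

end RegularExpression

theorem Language.add_mul_kstar_mul {α : Type*} (l m : Language α) : m + l * l∗ * m = l∗ * m := by
  conv_rhs => rw [← one_add_self_mul_kstar_eq_kstar l]
  rw [add_mul, one_mul]

namespace NFA

variable {α σ : Type*} (M : NFA α σ)

/-- `M.PathWithin S p r x`: reading `x` can lead from `p` to `r` with every state strictly between
the two endpoints in `S`; the endpoints themselves are unrestricted. -/
inductive PathWithin (S : Set σ) : σ → σ → List α → Prop
  | nil (p : σ) : PathWithin S p p []
  | single {p r : σ} {a : α} : r ∈ M.step p a → PathWithin S p r [a]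
  | cons {p q r : σ} {a : α} {x : List α} :
      q ∈ M.step p a → q ∈ S → PathWithin S q r x → PathWithin S p r (a :: x)

def pathLang (S : Set σ) (p r : σ) : Language α := {x | M.PathWithin S p r x}

variable {M}

@[simp]
theorem mem_pathLang {S : Set σ} {p r : σ} {x : List α} :
    x ∈ M.pathLang S p r ↔ M.PathWithin S p r x :=
  Iff.rfl

theorem PathWithin.mono {S T : Set σ} (hST : S ⊆ T) {p r : σ} {x : List α}
    (h : M.PathWithin S p r x) : M.PathWithin T p r x := by
  induction h with
  | nil p => exact .nil p
  | single h => exact .single h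
  | cons h hq _ ih => exact .cons h (hST hq) ih

theorem PathWithin.append {S : Set σ} {p q r : σ} {x y : List α} (hx : M.PathWithin S p q x)
    (hq : q ∈ S) (hy : M.PathWithin S q r y) : M.PathWithin S p r (x ++ y) := by
  induction hx with
  | nil p => exact hy
  | single h => exact .cons h hq hy
  | cons h hq' _ ih => exact .cons h hq' (ih hq hy)

theorem pathWithin_univ_iff {p r : σ} {x : List α} :
    M.PathWithin univ p r x ↔ Nonempty (M.Path p r x) := by
  constructor
  · intro h
    induction h with
    | nil p => exact ⟨.nil p⟩
    | single h => exact ⟨.cons _ _ _ _ _ h (.nil _)⟩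
    | cons h _ _ ih => exact ih.map (.cons _ _ _ _ _ h)
  · rintro ⟨π⟩
    induction π with
    | nil p => exact .nil p
    | cons t s u a x h _ ih => exact .cons h trivial ih

theorem accepts_eq_iSup_pathLang :
    M.accepts = ⨆ (p : M.start) (r : M.accept), M.pathLang univ p r := by
  ext x
  simp [accepts_iff_exists_path, Language.mem_iSup, pathWithin_univ_iff]

theorem pathLang_empty (p r : σ) :
    M.pathLang ∅ p r = (⨆ _ : p = r, 1) + ⨆ (a : α) (_ : r ∈ M.step p a), {[a]} := by
  ext x
  simp only [mem_pathLang, Language.mem_add, Language.mem_iSup, Language.mem_one]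
  constructor
  · rintro (_ | h | ⟨_, hq, _⟩)
    · exact .inl ⟨rfl, rfl⟩
    · exact .inr ⟨_, h, rfl⟩
    · exact absurd hq (notMem_empty _)
  · rintro (⟨rfl, rfl⟩ | ⟨a, h, rfl⟩)
    · exact .nil p
    · exact .single h

theorem singleton_le_pathLang {S : Set σ} {p r : σ} {a : α} (h : r ∈ M.step p a) :
    {[a]} ≤ M.pathLang S p r :=
  singleton_subset_iff.2 (.single h)

theorem singleton_mul_pathLang_le {S : Set σ} {p q r : σ} {a : α} (h : q ∈ M.step p a)
    (hq : q ∈ S) : {[a]} * M.pathLang S q r ≤ M.pathLang S p r := by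
  rintro _ ⟨_, rfl, x, hx, rfl⟩
  exact .cons h hq hx

theorem pathLang_mul_pathLang_le {S : Set σ} {p q r : σ} (hq : q ∈ S) :
    M.pathLang S p q * M.pathLang S q r ≤ M.pathLang S p r := by
  rintro _ ⟨x, hx, y, hy, rfl⟩
  exact hx.append hq hy

theorem pathLang_insert (S : Set σ) (q p r : σ) :
    M.pathLang (insert q S) p r =
      M.pathLang S p r + M.pathLang S p q * (M.pathLang S q q)∗ * M.pathLang S q r := by
  apply le_antisymm
  · intro x hx
    induction hx with
    | nil p => exact .inl (.nil p)
    | single h => exact .inl (.single h)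
    | @cons p t r a x h ht _ ih =>
      have hax : a :: x ∈ ({[a]} : Language α) * _ := Language.append_mem_mul (mem_singleton _) ih
      rcases ht with rfl | ht
      · -- the step enters `q`, and the loops at `q` that start the tail merge into the star
        rw [Language.add_mul_kstar_mul, ← mul_assoc] at hax
        exact .inr (mul_le_mul_left (mul_le_mul_left (singleton_le_pathLang h) _) _ hax)
      · rw [mul_add, ← mul_assoc, ← mul_assoc] at hax
        exact add_le_add (singleton_mul_pathLang_le h ht)
          (mul_le_mul_left (mul_le_mul_left (singleton_mul_pathLang_le h ht) _) _) hax
  · have hmono : ∀ p r, M.pathLang S p r ≤ M.pathLang (insert q S) p r :=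
      fun p r x hx => PathWithin.mono (subset_insert q S) hx
    have htrans : ∀ p r, M.pathLang (insert q S) p q * M.pathLang (insert q S) q r ≤
        M.pathLang (insert q S) p r :=
      fun p r => pathLang_mul_pathLang_le (mem_insert q S)
    grw [hmono p r, hmono p q, hmono q q, hmono q r, mul_kstar_le_self (htrans p q), htrans p r]
    exact (Language.add_self _).le

open RegularExpression in
theorem pathLang_mem_languages [Finite α] {S : Set σ} (hS : S.Finite) (p r : σ) :
    M.pathLang S p r ∈ languages α := by
  induction S, hS using Set.Finite.induction_on generalizing p r with
  | empty =>
    rw [pathLang_empty]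
    exact add_mem (iSup_mem_languages fun _ => one_mem _)
      (iSup_mem_languages fun a => iSup_mem_languages fun _ => singleton_mem_languages a)
  | @insert q S _ _ ih =>
    rw [pathLang_insert]
    exact add_mem (ih p r) (mul_mem (mul_mem (ih p q) (kstar_mem_languages (ih q q))) (ih q r))

end NFA

/-- Kleene's theorem, automaton-to-expression direction. -/
theorem nfa_to_regexp {α : Type*} {σ : Type*} [Fintype α] [Fintype σ]
    (M : NFA α σ) :
    ∃ e : RegularExpression α, e.matches' = M.accepts := by
  rw [← RegularExpression.mem_languages, M.accepts_eq_iSup_pathLang]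
  exact RegularExpression.iSup_mem_languages fun p => RegularExpression.iSup_mem_languages fun r =>
    M.pathLang_mem_languages finite_univ p r
end
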